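/- arXiv:2008.10698 — 2 statements merged into one kernel-verified Lean document; each statement's English description precedes it below -/
import Mathlib

section
/- Define the linear map H₁ on 3×2 real matrices by H₁(U [[a,b],[c,d],[e,f]] Vᵀ) = U [[0, (b-c)/(σ₁+σ₂)], [(c-b)/(σ₁+σ₂), 0], [e/σ₁, f/σ₂]] Vᵀ, where U ∈ O(3), V ∈ O(2) are fixed and σ₁, σ₂ > 0. Then the kernel of H₁ is exactly the 3-dimensional space spanned by U[[1,0],[0,1],[0,0]]Vᵀ, U[[1,0],[0,-1],[0,0]]Vᵀ, and U[[0,1],[1,0],[0,0]]Vᵀ. -/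
open Matrix

/-- Hessian of I₁ in the SVD frame, as a map on 3×2 matrices. -/
noncomputable def H1 (U : Matrix (Fin 3) (Fin 3) ℝ) (V : Matrix (Fin 2) (Fin 2) ℝ)
    (σ₁ σ₂ : ℝ) (A : Matrix (Fin 3) (Fin 2) ℝ) : Matrix (Fin 3) (Fin 2) ℝ :=
  let M := Uᵀ * A * V
  U * !![0, (M 0 1 - M 1 0) / (σ₁ + σ₂);
         (M 1 0 - M 0 1) / (σ₁ + σ₂), 0;
         M 2 0 / σ₁, M 2 1 / σ₂] * Vᵀ

noncomputable def midMat (σ₁ σ₂ : ℝ) (M : Matrix (Fin 3) (Fin 2) ℝ) : Matrix (Fin 3) (Fin 2) ℝ :=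
  !![0, (M 0 1 - M 1 0) / (σ₁ + σ₂);
     (M 1 0 - M 0 1) / (σ₁ + σ₂), 0;
     M 2 0 / σ₁, M 2 1 / σ₂]

lemma H1_eq (U : Matrix (Fin 3) (Fin 3) ℝ) (V : Matrix (Fin 2) (Fin 2) ℝ)
    (σ₁ σ₂ : ℝ) (A : Matrix (Fin 3) (Fin 2) ℝ) :
    H1 U V σ₁ σ₂ A = U * midMat σ₁ σ₂ (Uᵀ * A * V) * Vᵀ := rfl

lemma midMat_add (σ₁ σ₂ : ℝ) (M N : Matrix (Fin 3) (Fin 2) ℝ) :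
    midMat σ₁ σ₂ (M + N) = midMat σ₁ σ₂ M + midMat σ₁ σ₂ N := by
  unfold midMat
  ext i j
  fin_cases i <;> fin_cases j <;> simp [Matrix.add_apply] <;> ring

lemma midMat_smul (σ₁ σ₂ : ℝ) (c : ℝ) (M : Matrix (Fin 3) (Fin 2) ℝ) :
    midMat σ₁ σ₂ (c • M) = c • midMat σ₁ σ₂ M := by
  unfold midMat
  ext i j
  fin_cases i <;> fin_cases j <;> simp [Matrix.smul_apply] <;> ring

lemma H1_add (U : Matrix (Fin 3) (Fin 3) ℝ) (V : Matrix (Fin 2) (Fin 2) ℝ)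
    (σ₁ σ₂ : ℝ) (A B : Matrix (Fin 3) (Fin 2) ℝ) :
    H1 U V σ₁ σ₂ (A + B) = H1 U V σ₁ σ₂ A + H1 U V σ₁ σ₂ B := by
  simp only [H1_eq]
  rw [Matrix.mul_add, Matrix.add_mul, midMat_add, Matrix.mul_add, Matrix.add_mul]

lemma H1_smul (U : Matrix (Fin 3) (Fin 3) ℝ) (V : Matrix (Fin 2) (Fin 2) ℝ)
    (σ₁ σ₂ : ℝ) (c : ℝ) (A : Matrix (Fin 3) (Fin 2) ℝ) :
    H1 U V σ₁ σ₂ (c • A) = c • H1 U V σ₁ σ₂ A := by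
  simp only [H1_eq]
  rw [Matrix.mul_smul, Matrix.smul_mul, midMat_smul, Matrix.mul_smul, Matrix.smul_mul]

lemma sandwich (U : Matrix (Fin 3) (Fin 3) ℝ) (V : Matrix (Fin 2) (Fin 2) ℝ)
    (hU : Uᵀ * U = 1) (hV : Vᵀ * V = 1) (X : Matrix (Fin 3) (Fin 2) ℝ) :
    Uᵀ * (U * X * Vᵀ) * V = X := by
  simp only [← Matrix.mul_assoc]
  rw [hU, Matrix.one_mul, Matrix.mul_assoc, hV, Matrix.mul_one]

theorem H1_kernel (U : Matrix (Fin 3) (Fin 3) ℝ) (V : Matrix (Fin 2) (Fin 2) ℝ)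
    (hU : Uᵀ * U = 1) (hV : Vᵀ * V = 1) (σ₁ σ₂ : ℝ) (hσ₁ : 0 < σ₁) (hσ₂ : 0 < σ₂) :
    {A : Matrix (Fin 3) (Fin 2) ℝ | H1 U V σ₁ σ₂ A = 0}
      = (Submodule.span ℝ
          {U * !![(1:ℝ), 0; 0, 1; 0, 0] * Vᵀ,
           U * !![(1:ℝ), 0; 0, -1; 0, 0] * Vᵀ,
           U * !![(0:ℝ), 1; 1, 0; 0, 0] * Vᵀ} : Submodule ℝ (Matrix (Fin 3) (Fin 2) ℝ)) := by
  have hs : σ₁ + σ₂ ≠ 0 := by positivity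
  have hs1 : σ₁ ≠ 0 := ne_of_gt hσ₁
  have hs2 : σ₂ ≠ 0 := ne_of_gt hσ₂
  have hU' : U * Uᵀ = 1 := mul_eq_one_comm.mp hU
  have hV' : V * Vᵀ = 1 := mul_eq_one_comm.mp hV
  have hker : ∀ N : Matrix (Fin 3) (Fin 2) ℝ, midMat σ₁ σ₂ N = 0 →
      H1 U V σ₁ σ₂ (U * N * Vᵀ) = 0 := by
    intro N hN
    rw [H1_eq, sandwich U V hU hV, hN]
    simp
  ext A
  simp only [Set.mem_setOf_eq, SetLike.mem_coe]
  constructor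
  · intro h
    set M := Uᵀ * A * V with hMdef
    rw [H1_eq] at h
    have hB : midMat σ₁ σ₂ M = 0 := by
      have := congrArg (fun X => Uᵀ * X * V) h
      simpa [sandwich U V hU hV] using this
    have e01 : M 0 1 = M 1 0 := by
      have := congrFun (congrFun hB 0) 1
      simp [midMat, div_eq_zero_iff, hs] at this
      linarith
    have e20 : M 2 0 = 0 := by
      have := congrFun (congrFun hB 2) 0
      simpa [midMat, div_eq_zero_iff, hs1] using this
    have e21 : M 2 1 = 0 := by
      have := congrFun (congrFun hB 2) 1
      simpa [midMat, div_eq_zero_iff, hs2] using this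
    have hA : A = U * M * Vᵀ := by
      rw [hMdef]
      simp only [← Matrix.mul_assoc]
      rw [hU', Matrix.one_mul, Matrix.mul_assoc, hV', Matrix.mul_one]
    have hM2 : M = ((M 0 0 + M 1 1) / 2) • !![(1:ℝ), 0; 0, 1; 0, 0]
        + ((M 0 0 - M 1 1) / 2) • !![(1:ℝ), 0; 0, -1; 0, 0]
        + (M 0 1) • !![(0:ℝ), 1; 1, 0; 0, 0] := by
      ext i j
      fin_cases i <;> fin_cases j <;>
        simp [Matrix.add_apply, Matrix.smul_apply, Matrix.vecHead, Matrix.vecTail, e01, e20, e21] <;> ring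
    have hcomb : A = ((M 0 0 + M 1 1) / 2) • (U * !![(1:ℝ), 0; 0, 1; 0, 0] * Vᵀ)
        + ((M 0 0 - M 1 1) / 2) • (U * !![(1:ℝ), 0; 0, -1; 0, 0] * Vᵀ)
        + (M 0 1) • (U * !![(0:ℝ), 1; 1, 0; 0, 0] * Vᵀ) := by
      conv_lhs => rw [hA, hM2]
      rw [Matrix.mul_add, Matrix.add_mul, Matrix.mul_add, Matrix.add_mul]
      rw [Matrix.mul_smul, Matrix.smul_mul, Matrix.mul_smul, Matrix.smul_mul,
        Matrix.mul_smul, Matrix.smul_mul]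
    rw [hcomb]
    refine Submodule.add_mem _ (Submodule.add_mem _ ?_ ?_) ?_ <;>
      exact Submodule.smul_mem _ _ (Submodule.subset_span (by simp))
  · intro h
    refine Submodule.span_induction ?_ ?_ ?_ ?_ h
    · intro x hx
      rcases hx with rfl | rfl | rfl
      · exact hker _ (by ext i j; fin_cases i <;> fin_cases j <;> simp [midMat, Matrix.vecHead, Matrix.vecTail])
      · exact hker _ (by ext i j; fin_cases i <;> fin_cases j <;> simp [midMat, Matrix.vecHead, Matrix.vecTail])
      · exact hker _ (by ext i j; fin_cases i <;> fin_cases j <;> simp [midMat, Matrix.vecHead, Matrix.vecTail])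
    · simpa using hker 0 (by ext i j; fin_cases i <;> fin_cases j <;> simp [midMat, Matrix.vecHead, Matrix.vecTail])
    · intro x y _ _ hx hy
      rw [H1_add, hx, hy, add_zero]
    · intro c x _ hx
      rw [H1_smul, hx, smul_zero]
end

section
/- With H₁ as above, the matrices (1/√2)·U[[0,-1],[1,0],[0,0]]Vᵀ, U[[0,0],[0,0],[1,0]]Vᵀ, and U[[0,0],[0,0],[0,1]]Vᵀ are eigenmatrices of H₁ with eigenvalues 2/(σ₁+σ₂), 1/σ₁, and 1/σ₂ respectively. -/
open Matrix

lemma conj_eq (U : Matrix (Fin 3) (Fin 3) ℝ) (V : Matrix (Fin 2) (Fin 2) ℝ)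
    (hU : Uᵀ * U = 1) (hV : Vᵀ * V = 1) (B : Matrix (Fin 3) (Fin 2) ℝ) :
    Uᵀ * (U * B * Vᵀ) * V = B := by
  calc Uᵀ * (U * B * Vᵀ) * V = (Uᵀ * U) * B * (Vᵀ * V) := by
        simp only [Matrix.mul_assoc]
    _ = B := by rw [hU, hV, Matrix.one_mul, Matrix.mul_one]

theorem H1_eigenmatrices (U : Matrix (Fin 3) (Fin 3) ℝ) (V : Matrix (Fin 2) (Fin 2) ℝ)
    (hU : Uᵀ * U = 1) (hV : Vᵀ * V = 1) (σ₁ σ₂ : ℝ) (hσ₁ : 0 < σ₁) (hσ₂ : 0 < σ₂) :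
    H1 U V σ₁ σ₂ ((1 / Real.sqrt 2) • (U * !![(0:ℝ), -1; 1, 0; 0, 0] * Vᵀ))
        = (2 / (σ₁ + σ₂)) • ((1 / Real.sqrt 2) • (U * !![(0:ℝ), -1; 1, 0; 0, 0] * Vᵀ))
    ∧ H1 U V σ₁ σ₂ (U * !![(0:ℝ), 0; 0, 0; 1, 0] * Vᵀ)
        = (1 / σ₁) • (U * !![(0:ℝ), 0; 0, 0; 1, 0] * Vᵀ)
    ∧ H1 U V σ₁ σ₂ (U * !![(0:ℝ), 0; 0, 0; 0, 1] * Vᵀ)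
        = (1 / σ₂) • (U * !![(0:ℝ), 0; 0, 0; 0, 1] * Vᵀ) := by
  refine ⟨?_, ?_, ?_⟩ <;>
  · simp only [H1, Matrix.mul_smul, Matrix.smul_mul,
      conj_eq U V hU hV, Matrix.smul_apply, smul_eq_mul]
    rw [show ∀ c : ℝ, ∀ B : Matrix (Fin 3) (Fin 2) ℝ,
        c • (U * B * Vᵀ) = U * (c • B) * Vᵀ from fun c B => by
          rw [Matrix.mul_smul, Matrix.smul_mul]]
    try rw [show ∀ c : ℝ, ∀ B : Matrix (Fin 3) (Fin 2) ℝ,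
        c • (U * B * Vᵀ) = U * (c • B) * Vᵀ from fun c B => by
          rw [Matrix.mul_smul, Matrix.smul_mul]]
    congr 1
    congr 1
    ext i j
    fin_cases i <;> fin_cases j <;>
      simp [Matrix.smul_apply, Matrix.vecHead, Matrix.vecTail] <;> ring
end
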